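/- arXiv:1912.11262 — 4 statements merged into one kernel-verified Lean document; each statement's English description precedes it below -/
import Mathlib

section
/- Let 𝒞 be a clutter (antichain) on finite ground set E with blocker 𝒟 (the minimal sets meeting every member of 𝒞). If for every H ∈ 𝒞, K ∈ 𝒟, and k ∈ K we have (H \ K) ∪ {k} ∈ 𝒞, then 𝒞 is the set of bases of a matroid on E. -/
open Set

/-- The blocker of a set family `𝒞` on a type `α`: the inclusion-minimal
sets meeting every member of `𝒞`. -/
def blocker {α : Type*} (𝒞 : Set (Set α)) : Set (Set α) :=
  { K | (∀ H ∈ 𝒞, (K ∩ H).Nonempty) ∧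
        ∀ K', K' ⊂ K → ¬ (∀ H ∈ 𝒞, (K' ∩ H).Nonempty) }

/-- Any transversal of `𝒞` contains a minimal transversal, i.e., a member of
the blocker. -/
lemma exists_blocker_subset {α : Type*} [Fintype α] (𝒞 : Set (Set α))
    (T : Set α) (hT : ∀ H ∈ 𝒞, (T ∩ H).Nonempty) :
    ∃ K ∈ blocker 𝒞, K ⊆ T := by
  classical
  have hfin : ({K | K ⊆ T ∧ ∀ H ∈ 𝒞, (K ∩ H).Nonempty} : Set (Set α)).Finite :=
    Set.toFinite _
  obtain ⟨K, hK, hmin⟩ : ∃ K ∈ ({K | K ⊆ T ∧ ∀ H ∈ 𝒞, (K ∩ H).Nonempty} : Set (Set α)),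
      ∀ K' ∈ ({K | K ⊆ T ∧ ∀ H ∈ 𝒞, (K ∩ H).Nonempty} : Set (Set α)), K' ⊆ K → K = K' := by
    obtain ⟨K, hK⟩ := hfin.exists_minimal ⟨T, Subset.rfl, hT⟩
    exact ⟨K, hK.prop, fun K' h1 h2 => (hK.eq_of_le h1 h2).symm⟩
  refine ⟨K, ⟨hK.2, ?_⟩, hK.1⟩
  intro K' hK' hK'tr
  have : K = K' := hmin K' ⟨hK'.subset.trans hK.1, hK'tr⟩ hK'.subset
  exact hK'.ne this.symm

/-- If `𝒞` is a (nonempty) clutter on a finite ground set such that for every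
`H ∈ 𝒞`, every `K` in the blocker of `𝒞` and every `k ∈ K`, the set
`(H \ K) ∪ {k}` belongs to `𝒞`, then `𝒞` is the set of bases of a matroid. -/
theorem clutter_exchange_is_matroid {α : Type*} [Fintype α]
    (𝒞 : Set (Set α)) (hne : 𝒞.Nonempty)
    (hclutter : ∀ H ∈ 𝒞, ∀ H' ∈ 𝒞, H ⊆ H' → H = H')
    (hexch : ∀ H ∈ 𝒞, ∀ K ∈ blocker 𝒞, ∀ k ∈ K, (H \ K) ∪ {k} ∈ 𝒞) :
    ∃ M : Matroid α, M.E = Set.univ ∧ ∀ B : Set α, M.IsBase B ↔ B ∈ 𝒞 := by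
  classical
  have exch : Matroid.ExchangeProperty (· ∈ 𝒞) := by
    intro B₁ B₂ h₁ h₂ e he
    -- `B₁ᶜ ∪ {e}` is a transversal of `𝒞`
    have hT : ∀ H ∈ 𝒞, ((B₁ᶜ ∪ {e}) ∩ H).Nonempty := by
      intro H hH
      by_contra hcon
      rw [Set.not_nonempty_iff_eq_empty, Set.eq_empty_iff_forall_notMem] at hcon
      have hsub : H ⊆ B₁ := by
        intro x hx
        by_contra hxB
        exact hcon x ⟨Or.inl hxB, hx⟩
      have := hclutter H hH B₁ h₁ hsub
      subst this
      exact hcon e ⟨Or.inr rfl, he.1⟩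
    obtain ⟨K, hKb, hKT⟩ := exists_blocker_subset 𝒞 _ hT
    -- `K ∩ B₁ = {e}`
    have hKB₁ : K ∩ B₁ ⊆ {e} := by
      intro x ⟨hxK, hxB⟩
      rcases hKT hxK with h | h
      · exact absurd hxB h
      · exact h
    -- pick `k ∈ K ∩ B₂`
    obtain ⟨k, hkK, hkB₂⟩ := hKb.1 B₂ h₂
    have hke : k ≠ e := fun h => he.2 (h ▸ hkB₂)
    have hkB₁ : k ∉ B₁ := fun h => hke (hKB₁ ⟨hkK, h⟩)
    refine ⟨k, ⟨hkB₂, hkB₁⟩, ?_⟩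
    have := hexch B₁ h₁ K hKb k hkK
    have heq : (B₁ \ K) ∪ {k} = insert k (B₁ \ {e}) := by
      ext x
      simp only [Set.mem_union, Set.mem_diff, Set.mem_singleton_iff,
        Set.mem_insert_iff]
      constructor
      · rintro (⟨hx, hxK⟩ | rfl)
        · exact Or.inr ⟨hx, fun h => hxK (h ▸ by
            have : e ∈ K := by
              rcases hKb.1 B₁ h₁ with ⟨y, hyK, hyB⟩
              have := hKB₁ ⟨hyK, hyB⟩
              exact this ▸ hyK
            exact this)⟩
        · exact Or.inl rfl
      · rintro (rfl | ⟨hx, hxe⟩)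
        · exact Or.inr rfl
        · exact Or.inl ⟨hx, fun hxK => hxe (hKB₁ ⟨hxK, hx⟩)⟩
    rwa [heq] at this
  refine ⟨Matroid.ofIsBaseOfFinite (Set.finite_univ) (· ∈ 𝒞) hne exch
    (fun B _ => Set.subset_univ B), rfl, fun B => Iff.rfl⟩
end

section
/- Let G be a bipartite graph on V ⊔ [d+1] with every vertex of V having at least one neighbor, and let M be a matroid of rank d+1 on V. Suppose that for any two distinct cocircuits C, D of M, the neighborhood of C ∪ D in G covers all of [d+1]. Then there exists a basis B₀ of M whose neighborhood covers [d+1]. -/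
open Set

/-- A cocircuit of a matroid `M` is a circuit of the dual matroid `M✶`. -/
def Matroid.Cocircuit {α : Type*} (M : Matroid α) (C : Set α) : Prop :=
  C ⊆ M.E ∧ ¬ M✶.Indep C ∧ ∀ D, D ⊂ C → M✶.Indep D

namespace TropicalHolmsenAux

set_option linter.unusedSectionVars false

variable {V : Type*} [Fintype V] {M : Matroid V} {I J X Y : Set V}

/-- Rank of a set, as the cardinality of some maximal independent subset. -/
noncomputable def mr (M : Matroid V) (X : Set V) : ℕ :=
  (M.exists_isBasis' X).choose.ncard

lemma ncard_eq_mr (hI : M.IsBasis' I X) : I.ncard = mr M X := by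
  have h := (M.exists_isBasis' X).choose_spec
  rw [mr, Set.ncard_def, Set.ncard_def, hI.encard_eq_encard h]

lemma ncard_le_mr (hI : M.Indep I) (hIX : I ⊆ X) : I.ncard ≤ mr M X := by
  obtain ⟨J, hJ, hIJ⟩ := hI.subset_isBasis'_of_subset hIX
  rw [← ncard_eq_mr hJ]
  exact Set.ncard_le_ncard hIJ (Set.toFinite J)

lemma mr_mono (M : Matroid V) (hXY : X ⊆ Y) : mr M X ≤ mr M Y := by
  obtain ⟨I, hI⟩ := M.exists_isBasis' X
  rw [← ncard_eq_mr hI]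
  exact ncard_le_mr hI.indep (hI.subset.trans hXY)

lemma mr_le_ncard (M : Matroid V) (X : Set V) : mr M X ≤ X.ncard := by
  obtain ⟨I, hI⟩ := M.exists_isBasis' X
  rw [← ncard_eq_mr hI]
  exact Set.ncard_le_ncard hI.subset (Set.toFinite X)

lemma mr_insert_le (M : Matroid V) (x : V) (X : Set V) :
    mr M (insert x X) ≤ mr M X + 1 := by
  obtain ⟨I, hI⟩ := M.exists_isBasis' (insert x X)
  rw [← ncard_eq_mr hI]
  have h1 : I \ {x} ⊆ X := by
    intro v hv
    rcases hI.subset hv.1 with h | h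
    · exact absurd h hv.2
    · exact h
  have h2 : (I \ {x}).ncard ≤ mr M X :=
    ncard_le_mr (hI.indep.subset diff_subset) h1
  by_cases hx : x ∈ I
  · have := Set.ncard_diff_singleton_add_one hx (Set.toFinite I)
    omega
  · rw [Set.diff_singleton_eq_self hx] at h2
    omega

lemma mr_submod (M : Matroid V) (X Y : Set V) :
    mr M (X ∪ Y) + mr M (X ∩ Y) ≤ mr M X + mr M Y := by
  obtain ⟨I, hI⟩ := M.exists_isBasis' (X ∩ Y)
  obtain ⟨B, hB, hIB⟩ := hI.indep.subset_isBasis'_of_subset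
    (hI.subset.trans (inter_subset_left.trans subset_union_left))
  have hBX : (B ∩ X).ncard ≤ mr M X :=
    ncard_le_mr (hB.indep.subset inter_subset_left) inter_subset_right
  have hBY : (B ∩ Y).ncard ≤ mr M Y :=
    ncard_le_mr (hB.indep.subset inter_subset_left) inter_subset_right
  have hU : B ∩ X ∪ B ∩ Y = B := by
    rw [← inter_union_distrib_left]
    exact inter_eq_self_of_subset_left hB.subset
  have hInt : (B ∩ X) ∩ (B ∩ Y) = B ∩ (X ∩ Y) := by
    ext v; simp [and_assoc]; tauto
  have hIcard : I.ncard ≤ (B ∩ (X ∩ Y)).ncard :=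
    Set.ncard_le_ncard (subset_inter hIB hI.subset) (Set.toFinite _)
  have hsum := Set.ncard_union_add_ncard_inter (B ∩ X) (B ∩ Y)
    (Set.toFinite _) (Set.toFinite _)
  rw [hU, hInt] at hsum
  rw [← ncard_eq_mr hB, ← ncard_eq_mr hI]
  omega


/-- Every dependent set contains a minimal dependent set (a circuit). -/
lemma exists_min_dep (N : Matroid V) (D : Set V) (hD : ¬ N.Indep D) :
    ∃ C ⊆ D, ¬ N.Indep C ∧ ∀ C', C' ⊂ C → N.Indep C' := by
  by_cases h : ∀ C', C' ⊂ D → N.Indep C'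
  · exact ⟨D, subset_rfl, hD, h⟩
  · push_neg at h
    obtain ⟨D', hD'sub, hD'⟩ := h
    have : D'.ncard < D.ncard := Set.ncard_lt_ncard hD'sub (Set.toFinite D)
    obtain ⟨C, hC1, hC2, hC3⟩ := exists_min_dep N D' hD'
    exact ⟨C, hC1.trans hD'sub.subset, hC2, hC3⟩
termination_by D.ncard

lemma exists_cocircuit_disjoint (hE : M.E = Set.univ) (S : Set V)
    (hS : ¬ M.Spanning S) : ∃ C, M.Cocircuit C ∧ C ∩ S = ∅ := by
  have hSc : ¬ M✶.Indep Sᶜ := by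
    intro h
    have h2 : M.Spanning (M.E \ Sᶜ) :=
      (Matroid.coindep_iff_compl_spanning (by rw [hE]; exact subset_univ _)).mp h
    rw [hE, ← Set.compl_eq_univ_diff, compl_compl] at h2
    exact hS h2
  obtain ⟨C, hCsub, hCdep, hCmin⟩ := exists_min_dep M✶ Sᶜ hSc
  refine ⟨C, ⟨by rw [hE]; exact subset_univ _, hCdep, hCmin⟩, ?_⟩
  rw [Set.eq_empty_iff_forall_notMem]
  rintro v ⟨hv1, hv2⟩
  exact (hCsub hv1) hv2

lemma cocircuit_nonempty {C : Set V} (hC : M.Cocircuit C) : C.Nonempty := by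
  rw [Set.nonempty_iff_ne_empty]
  rintro rfl
  exact hC.2.1 M✶.empty_indep


/-- Rado's theorem, set version: base case where all sets are subsingletons. -/
lemma rado_single (n : ℕ) (A : Fin n → Set V) (h1 : ∀ i, (A i).ncard ≤ 1)
    (hR : ∀ J : Finset (Fin n), J.card ≤ mr M (⋃ i ∈ J, A i)) :
    ∃ T : Set V, M.Indep T ∧ ∀ i, ∃ v ∈ T, v ∈ A i := by
  have hone : ∀ i, ∃ a, A i = {a} := by
    intro i
    rw [← Set.ncard_eq_one]
    have := hR {i}
    simp only [Finset.card_singleton, Finset.mem_singleton, Set.iUnion_iUnion_eq_left] at this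
    have h2 := mr_le_ncard M (A i)
    have h3 := h1 i
    omega
  choose a ha using hone
  have hRa : (⋃ i ∈ (Finset.univ : Finset (Fin n)), A i) = Set.range a := by
    ext v
    simp only [Finset.mem_univ, Set.iUnion_true, Set.mem_iUnion, Set.mem_range, ha,
      Set.mem_singleton_iff]
    tauto
  have hcard : (Set.range a).ncard ≤ n := by
    rw [← Set.image_univ]
    calc (a '' Set.univ).ncard ≤ (Set.univ : Set (Fin n)).ncard := Set.ncard_image_le
      _ = n := by rw [Set.ncard_univ, Nat.card_eq_fintype_card, Fintype.card_fin]
  have hmr := hR Finset.univ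
  rw [Finset.card_univ, Fintype.card_fin, hRa] at hmr
  obtain ⟨I, hI⟩ := M.exists_isBasis' (Set.range a)
  have hIcard : n ≤ I.ncard := by rw [ncard_eq_mr hI]; exact hmr
  have hIeq : I = Set.range a :=
    Set.eq_of_subset_of_ncard_le hI.subset (by omega) (Set.toFinite _)
  refine ⟨Set.range a, hIeq ▸ hI.indep, fun i => ⟨a i, ⟨i, rfl⟩, by rw [ha]; rfl⟩⟩

/-- Rado's theorem, set version, by induction on the total size. -/
lemma rado_aux (N : ℕ) (n : ℕ) (A : Fin n → Set V)
    (hN : ∑ i, (A i).ncard ≤ N)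
    (hR : ∀ J : Finset (Fin n), J.card ≤ mr M (⋃ i ∈ J, A i)) :
    ∃ T : Set V, M.Indep T ∧ ∀ i, ∃ v ∈ T, v ∈ A i := by
  induction N generalizing A with
  | zero =>
    refine rado_single n A (fun i => ?_) hR
    have : (A i).ncard ≤ ∑ j, (A j).ncard :=
      Finset.single_le_sum (f := fun j => (A j).ncard) (fun j _ => Nat.zero_le _) (Finset.mem_univ i)
    omega
  | succ N ih =>
    by_cases h1 : ∀ i, (A i).ncard ≤ 1
    · exact rado_single n A h1 hR
    push_neg at h1
    obtain ⟨i0, hi0⟩ := h1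
    obtain ⟨x, hx, y, hy, hxy⟩ := (Set.one_lt_ncard (Set.toFinite _)).mp hi0
    -- helper to process one of the two deleted configurations
    have key : ∀ z ∈ A i0,
        (¬ ∀ J : Finset (Fin n),
            J.card ≤ mr M (⋃ i ∈ J, Function.update A i0 (A i0 \ {z}) i)) →
        ∃ K : Finset (Fin n), i0 ∉ K ∧
          mr M ((A i0 \ {z}) ∪ ⋃ i ∈ K, A i) ≤ K.card := by
      intro z hz hfail
      push_neg at hfail
      obtain ⟨J', hJ'⟩ := hfail
      have hi0J' : i0 ∈ J' := by
        by_contra hmem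
        have hEq : (⋃ i ∈ J', A i) = ⋃ i ∈ J', Function.update A i0 (A i0 \ {z}) i := by
          apply Set.iUnion₂_congr
          intro i hi
          rw [Function.update_of_ne (by rintro rfl; exact hmem hi) _ A]
        have := hR J'
        rw [hEq] at this
        omega
      refine ⟨J'.erase i0, Finset.notMem_erase _ _, ?_⟩
      have hins : J' = insert i0 (J'.erase i0) := (Finset.insert_erase hi0J').symm
      have hUeq : (⋃ i ∈ J', Function.update A i0 (A i0 \ {z}) i)
          = (A i0 \ {z}) ∪ ⋃ i ∈ J'.erase i0, A i := by
        conv_lhs => rw [hins]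
        rw [Finset.set_biUnion_insert]
        congr 1
        · simp
        · apply Set.iUnion₂_congr
          intro i hi
          rw [Function.update_of_ne (Finset.ne_of_mem_erase hi) _ A]
      rw [hUeq] at hJ'
      have hcard : J'.card = (J'.erase i0).card + 1 := by
        rw [Finset.card_erase_of_mem hi0J']
        have : 0 < J'.card := Finset.card_pos.mpr ⟨i0, hi0J'⟩
        omega
      omega
    by_cases hx' : ∀ J : Finset (Fin n),
        J.card ≤ mr M (⋃ i ∈ J, Function.update A i0 (A i0 \ {x}) i)
    · -- recurse on the smaller configuration
      obtain ⟨T, hT, hTA⟩ := ih (Function.update A i0 (A i0 \ {x})) (by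
        have hsum : ∑ i, (Function.update A i0 (A i0 \ {x}) i).ncard
            = ∑ i, (A i).ncard - (A i0).ncard + (A i0 \ {x}).ncard := by
          rw [show (fun i => (Function.update A i0 (A i0 \ {x}) i).ncard)
              = Function.update (fun i => (A i).ncard) i0 ((A i0 \ {x}).ncard) from ?_]
          · rw [Finset.sum_update_of_mem (Finset.mem_univ i0), Finset.sdiff_singleton_eq_erase]
            have hsplit : (A i0).ncard + ∑ x ∈ Finset.univ.erase i0, (A x).ncard
                = ∑ i, (A i).ncard :=
              Finset.add_sum_erase Finset.univ (fun j => (A j).ncard) (Finset.mem_univ i0)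
            omega
          · ext i
            by_cases hi : i = i0
            · subst hi; simp
            · simp [Function.update_of_ne hi]
        have hdiff : (A i0 \ {x}).ncard = (A i0).ncard - 1 :=
          Set.ncard_diff_singleton_of_mem hx
        have hle : (A i0).ncard ≤ ∑ i, (A i).ncard :=
          Finset.single_le_sum (f := fun j => (A j).ncard) (fun j _ => Nat.zero_le _) (Finset.mem_univ i0)
        omega) hx'
      refine ⟨T, hT, fun i => ?_⟩
      obtain ⟨v, hvT, hvA⟩ := hTA i
      refine ⟨v, hvT, ?_⟩
      by_cases hi : i = i0
      · subst hi
        rw [Function.update_self] at hvA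
        exact hvA.1
      · rwa [Function.update_of_ne hi] at hvA
    by_cases hy' : ∀ J : Finset (Fin n),
        J.card ≤ mr M (⋃ i ∈ J, Function.update A i0 (A i0 \ {y}) i)
    · obtain ⟨T, hT, hTA⟩ := ih (Function.update A i0 (A i0 \ {y})) (by
        have hsum : ∑ i, (Function.update A i0 (A i0 \ {y}) i).ncard
            = ∑ i, (A i).ncard - (A i0).ncard + (A i0 \ {y}).ncard := by
          rw [show (fun i => (Function.update A i0 (A i0 \ {y}) i).ncard)
              = Function.update (fun i => (A i).ncard) i0 ((A i0 \ {y}).ncard) from ?_]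
          · rw [Finset.sum_update_of_mem (Finset.mem_univ i0), Finset.sdiff_singleton_eq_erase]
            have hsplit : (A i0).ncard + ∑ x ∈ Finset.univ.erase i0, (A x).ncard
                = ∑ i, (A i).ncard :=
              Finset.add_sum_erase Finset.univ (fun j => (A j).ncard) (Finset.mem_univ i0)
            omega
          · ext i
            by_cases hi : i = i0
            · subst hi; simp
            · simp [Function.update_of_ne hi]
        have hdiff : (A i0 \ {y}).ncard = (A i0).ncard - 1 :=
          Set.ncard_diff_singleton_of_mem hy
        have hle : (A i0).ncard ≤ ∑ i, (A i).ncard :=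
          Finset.single_le_sum (f := fun j => (A j).ncard) (fun j _ => Nat.zero_le _) (Finset.mem_univ i0)
        omega) hy'
      refine ⟨T, hT, fun i => ?_⟩
      obtain ⟨v, hvT, hvA⟩ := hTA i
      refine ⟨v, hvT, ?_⟩
      by_cases hi : i = i0
      · subst hi
        rw [Function.update_self] at hvA
        exact hvA.1
      · rwa [Function.update_of_ne hi] at hvA
    -- both fail: contradiction with submodularity
    exfalso
    obtain ⟨J, hJ0, hJ⟩ := key x hx hx'
    obtain ⟨K, hK0, hK⟩ := key y hy hy'
    set X := (A i0 \ {x}) ∪ ⋃ i ∈ J, A i with hXdef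
    set Y := (A i0 \ {y}) ∪ ⋃ i ∈ K, A i with hYdef
    have hXY : X ∪ Y = A i0 ∪ ⋃ i ∈ J ∪ K, A i := by
      rw [hXdef, hYdef, Finset.set_biUnion_union]
      ext v
      simp only [Set.mem_union, Set.mem_diff, Set.mem_singleton_iff]
      have hvxy : v ≠ x ∨ v ≠ y := by
        by_cases h : v = x
        · subst h; exact Or.inr hxy
        · exact Or.inl h
      tauto
    have hXYint : (⋃ i ∈ J ∩ K, A i) ⊆ X ∩ Y := by
      intro v hv
      simp only [Set.mem_iUnion, Finset.mem_inter, exists_prop] at hv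
      obtain ⟨i, ⟨hiJ, hiK⟩, hvi⟩ := hv
      constructor
      · exact Or.inr (Set.mem_biUnion hiJ hvi)
      · exact Or.inr (Set.mem_biUnion hiK hvi)
    have h1 : (insert i0 (J ∪ K)).card ≤ mr M (X ∪ Y) := by
      have := hR (insert i0 (J ∪ K))
      rwa [show (⋃ i ∈ insert i0 (J ∪ K), A i) = X ∪ Y from ?_] at this
      rw [Finset.set_biUnion_insert, hXY]
    have h2 : (J ∩ K).card ≤ mr M (X ∩ Y) :=
      le_trans (hR (J ∩ K)) (mr_mono M hXYint)
    have h3 := mr_submod M X Y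
    have h4 : (insert i0 (J ∪ K)).card = (J ∪ K).card + 1 := by
      rw [Finset.card_insert_of_notMem (by simp [hJ0, hK0])]
    have h5 := Finset.card_union_add_card_inter J K
    omega


end TropicalHolmsenAux

open TropicalHolmsenAux in
/-- Combinatorial form of the tropical analogue of Holmsen's theorem:
if `M` has rank `d+1` and for any two distinct cocircuits `C, D` the
neighborhood of `C ∪ D` covers `[d+1]`, then some basis `B₀` has neighborhood
covering `[d+1]`. -/
theorem tropical_holmsen_core {V : Type*} [Fintype V] (d : ℕ)
    (adj : V → Fin (d + 1) → Prop) (hadj : ∀ v : V, ∃ i, adj v i)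
    (M : Matroid V) (hE : M.E = Set.univ)
    (hrank : ∀ B : Set V, M.IsBase B → B.ncard = d + 1)
    (hCD : ∀ C D : Set V, M.Cocircuit C → M.Cocircuit D → C ≠ D →
      ∀ i : Fin (d + 1), ∃ v ∈ C ∪ D, adj v i) :
    ∃ B₀ : Set V, M.IsBase B₀ ∧ ∀ i : Fin (d + 1), ∃ v ∈ B₀, adj v i := by
  classical
  set A : Fin (d + 1) → Set V := fun i => {v | adj v i} with hA
  obtain ⟨B, hB⟩ := M.exists_isBase
  have hmruniv : d + 1 ≤ mr M (Set.univ : Set V) := by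
    have := ncard_le_mr hB.indep (Set.subset_univ B)
    rwa [hrank B hB] at this
  have hnotsp : ∀ S : Set V, mr M S ≤ d → ¬ M.Spanning S := by
    intro S hS hsp
    obtain ⟨B', hB', hB'S⟩ := hsp.exists_isBase_subset
    have := ncard_le_mr hB'.indep hB'S
    rw [hrank B' hB'] at this
    omega
  have hR : ∀ J : Finset (Fin (d + 1)), J.card ≤ mr M (⋃ i ∈ J, A i) := by
    intro J
    by_contra hlt
    push_neg at hlt
    set U := ⋃ i ∈ J, A i with hU
    have hJne : J.Nonempty := Finset.card_pos.mp (by omega)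
    obtain ⟨i1, hi1⟩ := hJne
    have hJle : J.card ≤ d + 1 := by
      have := Finset.card_le_univ J
      simpa using this
    by_cases hJd : J.card = d + 1
    · have hJuniv : J = Finset.univ := Finset.eq_univ_of_card J (by simp [hJd])
      have hUuniv : U = Set.univ := by
        rw [Set.eq_univ_iff_forall]
        intro v
        obtain ⟨i, hi⟩ := hadj v
        exact Set.mem_biUnion (hJuniv ▸ Finset.mem_univ i) hi
      rw [hUuniv] at hlt
      omega
    · have hC : mr M U + 1 ≤ d := by omega
      obtain ⟨C₁, hC₁, hC₁U⟩ := exists_cocircuit_disjoint hE U (hnotsp U (by omega))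
      obtain ⟨x₁, hx₁⟩ := cocircuit_nonempty hC₁
      have h2 : mr M (insert x₁ U) ≤ d := le_trans (mr_insert_le M x₁ U) (by omega)
      obtain ⟨C₂, hC₂, hC₂U⟩ := exists_cocircuit_disjoint hE (insert x₁ U) (hnotsp _ h2)
      have hne : C₁ ≠ C₂ := by
        intro h
        have hmem : x₁ ∈ C₂ ∩ insert x₁ U := ⟨h ▸ hx₁, Set.mem_insert _ _⟩
        rw [hC₂U] at hmem
        exact hmem
      obtain ⟨v, hv, hvadj⟩ := hCD C₁ C₂ hC₁ hC₂ hne i1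
      have hvU : v ∈ U := Set.mem_biUnion hi1 hvadj
      rcases hv with hv | hv
      · have hmem : v ∈ C₁ ∩ U := ⟨hv, hvU⟩
        rw [hC₁U] at hmem
        exact hmem
      · have hmem : v ∈ C₂ ∩ insert x₁ U := ⟨hv, Set.mem_insert_of_mem _ hvU⟩
        rw [hC₂U] at hmem
        exact hmem
  obtain ⟨T, hT, hTA⟩ := rado_aux (∑ i, (A i).ncard) (d + 1) A le_rfl hR
  obtain ⟨B₀, hB₀, hTB₀⟩ := hT.exists_isBase_superset
  refine ⟨B₀, hB₀, fun i => ?_⟩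
  obtain ⟨v, hvT, hvA⟩ := hTA i
  exact ⟨v, hTB₀ hvT, hvA⟩
end

section
/- A point p ∈ R^d is contained in the tropical convex hull of v¹, …, vⁿ ∈ T_max^d if and only if for every index i ∈ [d+1] there exists some j with v^j ∈ S_i(p), where S_i(p) = { z ∈ T_max^d : z_i + p_k ≥ z_k + p_i for all 1 ≤ k ≤ d+1 } with the convention p_{d+1} = z_{d+1} = 0. -/
/-- Extend a point `z ∈ T_max^d` to `d+1` coordinates by setting the last
coordinate to `0`. -/
def extT {d : ℕ} (z : Fin d → WithBot ℝ) (k : Fin (d + 1)) : WithBot ℝ :=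
  if h : (k : ℕ) < d then z ⟨k, h⟩ else 0

/-- Extend `p ∈ ℝ^d` to `d+1` coordinates by setting the last one to `0`. -/
def extR {d : ℕ} (p : Fin d → ℝ) (k : Fin (d + 1)) : ℝ :=
  if h : (k : ℕ) < d then p ⟨k, h⟩ else 0

/-- The `i`-th affine sector of a point `p ∈ ℝ^d`:
`S_i(p) = { z : z_i + p_k ≥ z_k + p_i for all k }` with the convention
`p_{d+1} = z_{d+1} = 0`. -/
def Sector {d : ℕ} (p : Fin d → ℝ) (i : Fin (d + 1)) :
    Set (Fin d → WithBot ℝ) :=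
  { z | ∀ k : Fin (d + 1),
      extT z k + (extR p i : WithBot ℝ) ≤ extT z i + (extR p k : WithBot ℝ) }

lemma extT_last {d : ℕ} (z : Fin d → WithBot ℝ) : extT z (Fin.last d) = 0 := by
  simp [extT]

lemma extT_castSucc {d : ℕ} (z : Fin d → WithBot ℝ) (k : Fin d) :
    extT z (Fin.castSucc k) = z k := by
  simp [extT]

lemma extR_last {d : ℕ} (p : Fin d → ℝ) : extR p (Fin.last d) = 0 := by
  simp [extR]

lemma extR_castSucc {d : ℕ} (p : Fin d → ℝ) (k : Fin d) :
    extR p (Fin.castSucc k) = p k := by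
  simp [extR]

/-- A point `p ∈ ℝ^d` lies in the tropical convex hull of `v¹,…,vⁿ` iff
every sector index `i ∈ [d+1]` is covered, i.e. some `v^j` lies in `S_i(p)`. -/
theorem tropical_farkas {d n : ℕ} (v : Fin n → (Fin d → WithBot ℝ))
    (p : Fin d → ℝ) :
    (∃ lam : Fin n → WithBot ℝ,
        (Finset.univ.sup lam = 0) ∧
        ∀ k : Fin d, ((p k : ℝ) : WithBot ℝ) =
          Finset.univ.sup (fun j => lam j + v j k)) ↔
      ∀ i : Fin (d + 1), ∃ j : Fin n, v j ∈ Sector p i := by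
  constructor
  · rintro ⟨lam, hsup, hp⟩ i
    have hn : (Finset.univ : Finset (Fin n)).Nonempty := by
      by_contra hcon
      rw [Finset.not_nonempty_iff_eq_empty] at hcon
      rw [hcon, Finset.sup_empty] at hsup
      exact absurd hsup (by simp)
    induction i using Fin.lastCases with
    | last =>
      obtain ⟨j, -, hj⟩ := Finset.exists_mem_eq_sup Finset.univ hn lam
      have hl0 : lam j = 0 := by rw [← hj, hsup]
      refine ⟨j, fun k => ?_⟩
      rw [extT_last, extR_last]
      induction k using Fin.lastCases with
      | last => simp [extT_last, extR_last]
      | cast k =>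
        rw [extT_castSucc, extR_castSucc]
        have h1 : lam j + v j k ≤ ((p k : ℝ) : WithBot ℝ) := by
          rw [hp k]
          exact Finset.le_sup (f := fun j => lam j + v j k) (Finset.mem_univ j)
        rw [hl0, zero_add] at h1
        simpa using h1
    | cast i =>
      obtain ⟨j, -, hj⟩ :=
        Finset.exists_mem_eq_sup Finset.univ hn (fun j => lam j + v j i)
      have hpi : lam j + v j i = ((p i : ℝ) : WithBot ℝ) := by
        rw [← hj, ← hp i]
      obtain ⟨a, b, ha, hb, hab⟩ := WithBot.add_eq_coe.mp hpi
      have hale : a ≤ 0 := by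
        have : lam j ≤ Finset.univ.sup lam := Finset.le_sup (Finset.mem_univ j)
        rw [hsup, ← ha] at this
        exact_mod_cast this
      refine ⟨j, fun k => ?_⟩
      rw [extT_castSucc, extR_castSucc, ← hb]
      induction k using Fin.lastCases with
      | last =>
        rw [extT_last, extR_last]
        have : p i ≤ b := by linarith
        simpa using this
      | cast k =>
        rw [extT_castSucc, extR_castSucc]
        have h1 : lam j + v j k ≤ ((p k : ℝ) : WithBot ℝ) := by
          rw [hp k]
          exact Finset.le_sup (f := fun j => lam j + v j k) (Finset.mem_univ j)
        rw [← ha] at h1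
        rcases hc : v j k with _ | c
        · simp [WithBot.none_eq_bot]
        · rw [hc] at h1
          simp only [WithBot.some_eq_coe] at h1 ⊢
          have h2 : a + c ≤ p k := by exact_mod_cast h1
          have : c + p i ≤ b + p k := by linarith
          exact_mod_cast this
  · intro h
    classical
    have hne : (Finset.univ : Finset (Fin (d + 1))).Nonempty :=
      ⟨Fin.last d, Finset.mem_univ _⟩
    set g : Fin n → Fin (d + 1) → ℝ :=
      fun j m => extR p m - (extT (v j) m).unbotD (extR p m) with hg
    set μ : Fin n → ℝ := fun j => Finset.univ.inf' hne (g j) with hμ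
    have hμle : ∀ j m, μ j ≤ g j m := fun j m => Finset.inf'_le _ (Finset.mem_univ m)
    have hglast : ∀ j, g j (Fin.last d) = 0 := by
      intro j; simp [hg, extT_last, extR_last]
    have hμ0 : ∀ j, μ j ≤ 0 := fun j => (hglast j) ▸ hμle j (Fin.last d)
    have hA : ∀ j k, ((μ j : ℝ) : WithBot ℝ) + v j k ≤ ((p k : ℝ) : WithBot ℝ) := by
      intro j k
      rcases hb : v j k with _ | b
      · simp [WithBot.none_eq_bot]
      · have h1 := hμle j (Fin.castSucc k)
        have hgk : g j (Fin.castSucc k) = p k - b := by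
          simp [hg, extT_castSucc, extR_castSucc, hb, WithBot.some_eq_coe]
        rw [hgk] at h1
        have h2 : μ j + b ≤ p k := by linarith
        rw [WithBot.some_eq_coe]
        exact_mod_cast h2
    refine ⟨fun j => ((μ j : ℝ) : WithBot ℝ), ?_, ?_⟩
    · obtain ⟨j0, hj0⟩ := h (Fin.last d)
      have hμj0 : μ j0 = 0 := by
        refine le_antisymm (hμ0 j0) ?_
        refine Finset.le_inf' hne _ (fun m _ => ?_)
        rcases hb : extT (v j0) m with _ | b
        · simp [hg, hb, WithBot.none_eq_bot]
        · have h2 := hj0 m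
          rw [extT_last, extR_last, hb, WithBot.some_eq_coe] at h2
          have hble : b ≤ extR p m := by
            have := h2
            simp only [add_zero, zero_add, WithBot.coe_zero] at this
            exact_mod_cast this
          simp only [hg, hb, WithBot.some_eq_coe, WithBot.unbotD_coe]
          linarith
      refine le_antisymm (Finset.sup_le fun j _ => ?_) ?_
      · exact_mod_cast hμ0 j
      · have h3 := Finset.le_sup (s := (Finset.univ : Finset (Fin n)))
          (f := fun j => ((μ j : ℝ) : WithBot ℝ)) (Finset.mem_univ j0)
        simp only [hμj0, WithBot.coe_zero] at h3
        exact h3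
    · intro k
      refine le_antisymm ?_ (Finset.sup_le fun j _ => hA j k)
      obtain ⟨j, hj⟩ := h (Fin.castSucc k)
      have h1 := hj (Fin.last d)
      rw [extT_last, extR_last, extT_castSucc, extR_castSucc] at h1
      have h1' : ((p k : ℝ) : WithBot ℝ) ≤ v j k := by simpa using h1
      rcases hb : v j k with _ | b
      · rw [hb, WithBot.none_eq_bot] at h1'; exact absurd h1' (by simp)
      · have hbk : p k ≤ b := by
          rw [hb, WithBot.some_eq_coe] at h1'; exact_mod_cast h1'
        have hμb : p k - b ≤ μ j := by
          refine Finset.le_inf' hne _ (fun m _ => ?_)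
          rcases hc : extT (v j) m with _ | c
          · simp only [hg, hc, WithBot.none_eq_bot, WithBot.unbotD_bot]
            linarith
          · have h2 := hj m
            rw [extT_castSucc, extR_castSucc, hc, hb,
              WithBot.some_eq_coe, WithBot.some_eq_coe] at h2
            have h3 : c + p k ≤ b + extR p m := by exact_mod_cast h2
            simp only [hg, hc, WithBot.some_eq_coe, WithBot.unbotD_coe]
            linarith
        calc ((p k : ℝ) : WithBot ℝ) ≤ ((μ j : ℝ) : WithBot ℝ) + v j k := by
              rw [hb, WithBot.some_eq_coe]
              exact_mod_cast (by linarith : p k ≤ μ j + b)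
          _ ≤ _ := Finset.le_sup
              (f := fun j => ((μ j : ℝ) : WithBot ℝ) + v j k) (Finset.mem_univ j)
end

section
/- Let H be a 3-uniform 3-partite hypergraph on U = A ⊔ B ⊔ C with |A| = |B| = |C| = k. For each hyperedge h define v_h ∈ T_max^U to be 0 on the three vertices of h and −∞ elsewhere, and define color classes C_a = { h ∈ H : a ∈ h } for a ∈ A. Then there exists x ∈ T_max^H with ⨁_{h} v_h ⊙ x_h = 0 (the all-zero vector in R^U) and |supp(x) ∩ C_a| = 1 for all a ∈ A if and only if H admits a perfect 3-dimensional matching. -/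
open scoped Classical

/-- The 3-dimensional-matching reduction for tropical colorful linear
programming. `H` is a 3-uniform 3-partite hypergraph on `U = A ⊔ B ⊔ C` with
`|A| = |B| = |C| = k`. For each hyperedge `h`, the point `v_h ∈ T_max^U` is
`0` on the vertices of `h` and `-∞` elsewhere; the color class of `a ∈ A`
consists of the hyperedges containing `a`. There is a tropical colorful
solution iff `H` has a perfect 3-dimensional matching. -/
theorem tropical_colorful_iff_3dm {U : Type*} [Fintype U] [DecidableEq U]
    (A B C : Finset U) (k : ℕ)
    (hA : A.card = k) (hB : B.card = k) (hC : C.card = k)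
    (hAB : Disjoint A B) (hAC : Disjoint A C) (hBC : Disjoint B C)
    (hU : A ∪ B ∪ C = Finset.univ)
    (H : Finset (Finset U))
    (hH : ∀ h ∈ H, (h ∩ A).card = 1 ∧ (h ∩ B).card = 1 ∧ (h ∩ C).card = 1 ∧
      h.card = 3)
    (v : Finset U → U → WithBot ℝ)
    (hv : ∀ h : Finset U, ∀ u : U, v h u = if u ∈ h then (0 : WithBot ℝ) else ⊥) :
    (∃ x : Finset U → WithBot ℝ,
        (∀ u : U, H.sup (fun h => v h u + x h) = 0) ∧
        (∀ a ∈ A, ((H.filter (fun h => x h ≠ ⊥)).filter (fun h => a ∈ h)).card = 1)) ↔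
      ∃ M : Finset (Finset U), M ⊆ H ∧
        (∀ u : U, ∃ h ∈ M, u ∈ h) ∧
        (∀ h₁ ∈ M, ∀ h₂ ∈ M, h₁ ≠ h₂ → Disjoint h₁ h₂) := by
  constructor
  · rintro ⟨x, hx0, hx1⟩
    set S := H.filter (fun h => x h ≠ ⊥) with hSdef
    have hSsub : S ⊆ H := Finset.filter_subset _ _
    -- coverage
    have hcover : ∀ u : U, ∃ h ∈ S, u ∈ h := by
      intro u
      have h0 : (0 : WithBot ℝ) ≤ H.sup (fun h => v h u + x h) := (hx0 u).ge
      rw [Finset.le_sup_iff (bot_lt_iff_ne_bot.mpr (by simp) : (⊥ : WithBot ℝ) < 0)] at h0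
      obtain ⟨h, hhH, hle⟩ := h0
      have hu : u ∈ h := by
        by_contra hnu
        rw [hv, if_neg hnu, WithBot.bot_add] at hle
        exact absurd hle (by simp)
      have hxh : x h ≠ ⊥ := by
        intro hb
        rw [hb, WithBot.add_bot] at hle
        exact absurd hle (by simp)
      exact ⟨h, Finset.mem_filter.mpr ⟨hhH, hxh⟩, hu⟩
    -- uniqueness for A colors
    have huniqA : ∀ a ∈ A, ∀ h₁ ∈ S, ∀ h₂ ∈ S, a ∈ h₁ → a ∈ h₂ → h₁ = h₂ := by
      intro a ha h₁ h1S h₂ h2S ha1 ha2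
      exact Finset.card_le_one.mp (hx1 a ha).le
        h₁ (Finset.mem_filter.mpr ⟨h1S, ha1⟩) h₂ (Finset.mem_filter.mpr ⟨h2S, ha2⟩)
    -- unique intersection elements
    have pick : ∀ (h P : Finset U), (h ∩ P).card = 1 →
        ∃ p, p ∈ h ∧ p ∈ P ∧ ∀ q ∈ h, q ∈ P → q = p := by
      intro h P hcard
      obtain ⟨p, hp⟩ := Finset.card_eq_one.mp hcard
      have hpm : p ∈ h ∩ P := hp ▸ Finset.mem_singleton_self p
      refine ⟨p, (Finset.mem_inter.mp hpm).1, (Finset.mem_inter.mp hpm).2, ?_⟩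
      intro q hq hqP
      have : q ∈ h ∩ P := Finset.mem_inter.mpr ⟨hq, hqP⟩
      rw [hp] at this
      exact Finset.mem_singleton.mp this
    have hfA : ∀ h ∈ S, ∃ p, p ∈ h ∧ p ∈ A ∧ ∀ q ∈ h, q ∈ A → q = p :=
      fun h hS => pick h A (hH h (hSsub hS)).1
    have hfB : ∀ h ∈ S, ∃ p, p ∈ h ∧ p ∈ B ∧ ∀ q ∈ h, q ∈ B → q = p :=
      fun h hS => pick h B (hH h (hSsub hS)).2.1
    have hfC : ∀ h ∈ S, ∃ p, p ∈ h ∧ p ∈ C ∧ ∀ q ∈ h, q ∈ C → q = p :=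
      fun h hS => pick h C (hH h (hSsub hS)).2.2.1
    -- A-element function via attach
    let gA : {h // h ∈ S} → U := fun h => (hfA h.1 h.2).choose
    have hgA1 : ∀ h, gA h ∈ h.1 := fun h => (hfA h.1 h.2).choose_spec.1
    have hgA2 : ∀ h, gA h ∈ A := fun h => (hfA h.1 h.2).choose_spec.2.1
    have hgA3 : ∀ h, ∀ q ∈ h.1, q ∈ A → q = gA h :=
      fun h => (hfA h.1 h.2).choose_spec.2.2
    have hinjA : ∀ h₁ h₂ : {h // h ∈ S}, gA h₁ = gA h₂ → h₁ = h₂ := by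
      intro h₁ h₂ heq
      exact Subtype.ext (huniqA (gA h₁) (hgA2 h₁) h₁.1 h₁.2 h₂.1 h₂.2 (hgA1 h₁)
        (heq ▸ hgA1 h₂))
    have hsurjA : ∀ a ∈ A, ∃ h : {h // h ∈ S}, gA h = a := by
      intro a ha
      obtain ⟨h, hS, hah⟩ := hcover a
      exact ⟨⟨h, hS⟩, (hgA3 ⟨h, hS⟩ a hah ha).symm⟩
    have hcard1 : S.card ≤ k := by
      rw [← hA, ← Finset.card_attach (s := S)]
      exact Finset.card_le_card_of_injOn gA (fun h _ => hgA2 h)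
        (fun h₁ _ h₂ _ heq => hinjA h₁ h₂ heq)
    have hcard2 : k ≤ S.card := by
      rw [← hA, ← Finset.card_attach (s := S)]
      refine Finset.card_le_card_of_surjOn gA ?_
      intro a ha
      obtain ⟨h, hh⟩ := hsurjA a ha
      exact ⟨h, by simp, hh⟩
    have hScard : S.card = k := le_antisymm hcard1 hcard2
    -- B and C uniqueness via surjectivity + cardinality
    have keyBC : ∀ P : Finset U, P.card = k →
        (∀ h ∈ S, ∃ p, p ∈ h ∧ p ∈ P ∧ ∀ q ∈ h, q ∈ P → q = p) →
        ∀ u ∈ P, ∀ h₁ ∈ S, ∀ h₂ ∈ S, u ∈ h₁ → u ∈ h₂ → h₁ = h₂ := by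
      intro P hPk hf u hu h₁ h1S h₂ h2S hu1 hu2
      let g : ∀ h ∈ S, U := fun h hS => (hf h hS).choose
      have hg1 : ∀ h hS, g h hS ∈ h := fun h hS => (hf h hS).choose_spec.1
      have hg2 : ∀ h hS, g h hS ∈ P := fun h hS => (hf h hS).choose_spec.2.1
      have hg3 : ∀ h hS, ∀ q ∈ h, q ∈ P → q = g h hS :=
        fun h hS => (hf h hS).choose_spec.2.2
      have hsurj : ∀ p ∈ P, ∃ h hS, g h hS = p := by
        intro p hp
        obtain ⟨h, hS, hph⟩ := hcover p
        exact ⟨h, hS, (hg3 h hS p hph hp).symm⟩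
      have hinj := Finset.inj_on_of_surj_on_of_card_le g hg2 hsurj
        (by rw [hScard, hPk])
      have e1 : u = g h₁ h1S := hg3 h₁ h1S u hu1 hu
      have e2 : u = g h₂ h2S := hg3 h₂ h2S u hu2 hu
      exact hinj h1S h2S (e1 ▸ e2 ▸ rfl)
    refine ⟨S, hSsub, hcover, ?_⟩
    intro h₁ h1S h₂ h2S hne
    by_contra hnd
    obtain ⟨u, hu1, hu2⟩ := Finset.not_disjoint_iff.mp hnd
    have huU : u ∈ A ∪ B ∪ C := hU ▸ Finset.mem_univ u
    rcases Finset.mem_union.mp huU with huAB | huC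
    · rcases Finset.mem_union.mp huAB with huA | huB
      · exact hne (huniqA u huA h₁ h1S h₂ h2S hu1 hu2)
      · exact hne (keyBC B hB hfB u huB h₁ h1S h₂ h2S hu1 hu2)
    · exact hne (keyBC C hC hfC u huC h₁ h1S h₂ h2S hu1 hu2)
  · rintro ⟨M, hMH, hMcov, hMdisj⟩
    refine ⟨fun h => if h ∈ M then 0 else ⊥, ?_, ?_⟩
    · intro u
      apply le_antisymm
      · apply Finset.sup_le
        intro h _
        have h1 : v h u ≤ 0 := by rw [hv]; split <;> simp
        have h2 : (if h ∈ M then (0 : WithBot ℝ) else ⊥) ≤ 0 := by split <;> simp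
        calc v h u + _ ≤ 0 + 0 := add_le_add h1 h2
          _ = 0 := by simp
      · obtain ⟨h, hM, hu⟩ := hMcov u
        have := Finset.le_sup (f := fun h => v h u + if h ∈ M then (0:WithBot ℝ) else ⊥)
          (hMH hM)
        simpa [hv, hu, hM] using this
    · intro a ha
      obtain ⟨h, hM, hah⟩ := hMcov a
      rw [Finset.card_eq_one]
      refine ⟨h, ?_⟩
      ext g
      simp only [Finset.mem_filter, Finset.mem_singleton]
      constructor
      · rintro ⟨⟨hgH, hgne⟩, hag⟩
        have hgM : g ∈ M := by by_contra hc; simp [hc] at hgne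
        by_contra hne
        exact (Finset.disjoint_left.mp (hMdisj g hgM h hM hne) hag) hah
      · rintro rfl
        exact ⟨⟨hMH hM, by simp [hM]⟩, hah⟩
end
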